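/- The uniform morphism α from {0,1,2} to words over {0,1,2,3,4} defined by α(0)=0123014, α(1)=0130124, α(2)=0120134 is square-free: for every square-free word w over {0,1,2}, the image α(w) is square-free. Moreover, α(w) is a tournament word over {0,1,2,3,4}: for every pair of distinct letters i,j, at most one of ij, ji occurs as a factor of α(w). Consequently, there exists an infinite square-free tournament word over a 5-letter alphabet. -/
import Mathlib


def SqFree {α : Type*} (w : List α) : Prop :=
  ∀ u : List α, u ≠ [] → ¬ (u ++ u) <:+: w

def InfSqFree {α : Type*} (w : ℕ → α) : Prop :=
  ∀ m k, 0 < k → ∃ i < k, w (m + i) ≠ w (m + k + i)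

/-- The uniform morphism `α(0)=0123014`, `α(1)=0130124`, `α(2)=0120134` from
ternary words to words over `{0,1,2,3,4}`. -/
def alphaT : Fin 3 → List (Fin 5)
  | 0 => [0, 1, 2, 3, 0, 1, 4]
  | 1 => [0, 1, 3, 0, 1, 2, 4]
  | 2 => [0, 1, 2, 0, 1, 3, 4]


def tm : ℕ → Bool
  | 0 => false
  | n+1 => if (n+1) % 2 = 0 then tm ((n+1)/2) else !tm ((n+1)/2)
  decreasing_by all_goals exact Nat.div_lt_self (Nat.succ_pos _) one_lt_two

lemma tm_even (n : ℕ) : tm (2*n) = tm n := by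
  cases n with
  | zero => rfl
  | succ m =>
    show tm (2*m+1+1) = tm (m+1)
    rw [tm]
    have h1 : (2*m+1+1) % 2 = 0 := by omega
    have h2 : (2*m+1+1) / 2 = m+1 := by omega
    rw [h1, h2]; simp

lemma tm_odd (n : ℕ) : tm (2*n+1) = !tm n := by
  cases n with
  | zero =>
    show tm 1 = !tm 0
    simp [tm]
  | succ m =>
    show tm (2*(m+1)+1) = !tm (m+1)
    have : 2*(m+1)+1 = (2*(m+1)) + 1 := rfl
    rw [tm]
    have h1 : (2*(m+1)+1) % 2 ≠ 0 := by omega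
    have h2 : (2*(m+1)+1) / 2 = m+1 := by omega
    rw [if_neg h1, h2]

lemma tm_no_triple (m : ℕ) : ¬ (tm m = tm (m+1) ∧ tm (m+1) = tm (m+2)) := by
  rcases Nat.even_or_odd m with ⟨a, ha⟩ | ⟨a, ha⟩
  · subst ha
    have h1 : tm (a+a) = tm a := by rw [← two_mul] at *; exact tm_even a
    have h2 : tm (a+a+1) = !tm a := by rw [show a+a = 2*a by ring]; exact tm_odd a
    rintro ⟨h, -⟩; rw [h1, h2] at h; simp at h
  · subst ha
    have h1 : tm (2*a+1+1) = tm (a+1) := by rw [show 2*a+1+1 = 2*(a+1) by ring]; exact tm_even (a+1)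
    have h2 : tm (2*a+1+2) = !tm (a+1) := by rw [show 2*a+1+2 = 2*(a+1)+1 by ring]; exact tm_odd (a+1)
    rintro ⟨-, h⟩; rw [h1, h2] at h; simp at h

lemma tm_step (n : ℕ) : tm (2*n) ≠ tm (2*n+1) := by rw [tm_even, tm_odd]; simp

theorem tm_of : ∀ k, 1 ≤ k → ∀ m, ∃ i ≤ k, tm (m+i) ≠ tm (m+k+i) := by
  intro k
  induction k using Nat.strong_induction_on with
  | _ k IH =>
    intro hk m
    by_contra hcon
    push_neg at hcon
    have hper : ∀ i, i ≤ k → tm (m+i) = tm (m+k+i) := fun i h => hcon i h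
    rcases Nat.lt_or_ge k 2 with h2 | h2
    · have hk1 : k = 1 := by omega
      subst hk1
      refine tm_no_triple m ⟨?_, ?_⟩
      · have := hper 0 (by norm_num); simpa using this
      · have := hper 1 le_rfl
        rw [show m+1+1 = m+2 by omega] at this; simpa using this
    rcases Nat.even_or_odd k with ⟨l, hl⟩ | ⟨l, hl⟩
    · have hl1 : 1 ≤ l := by omega
      have hlt : l < k := by omega
      rcases Nat.even_or_odd m with ⟨a, ha⟩ | ⟨a, ha⟩
      · obtain ⟨i, hi, hne⟩ := IH l hlt hl1 a
        apply hne
        have h := hper (2*i) (by omega)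
        rw [show m + 2*i = 2*(a+i) by omega, show m + k + 2*i = 2*(a+l+i) by omega,
          tm_even, tm_even] at h
        exact h
      · obtain ⟨i, hi, hne⟩ := IH l hlt hl1 a
        apply hne
        have h := hper (2*i) (by omega)
        rw [show m + 2*i = 2*(a+i)+1 by omega, show m + k + 2*i = 2*(a+l+i)+1 by omega,
          tm_odd, tm_odd] at h
        simpa using h
    · -- k odd, k ≥ 3
      have hk3 : 3 ≤ k := by omega
      have alt : ∀ i, i < 2*k → tm (m+i) ≠ tm (m+i+1) := by
        intro i hi
        rcases Nat.even_or_odd (m+i) with ⟨b, hb⟩ | ⟨b, hb⟩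
        · rw [show m+i+1 = 2*b+1 by omega, show m+i = 2*b by omega]
          exact tm_step b
        · rcases Nat.lt_or_ge i k with hik | hik
          · have h1 := hper i (le_of_lt hik)
            have h2 := hper (i+1) hik
            rw [h1, show m+i+1 = m+(i+1) by omega, h2]
            set c := (m+k+i)/2 with hc
            rw [show m+k+(i+1) = 2*c+1 by omega, show m+k+i = 2*c by omega]
            exact tm_step c
          · set j := i - k with hj
            have hjk : j + 1 ≤ k := by omega
            have h1 := hper j (by omega)
            have h2 := hper (j+1) hjk
            rw [show m+i+1 = m+k+(j+1) by omega, show m+i = m+k+j by omega, ← h1, ← h2]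
            set c := (m+j)/2 with hc
            rw [show m+(j+1) = 2*c+1 by omega, show m+j = 2*c by omega]
            exact tm_step c
      have flip : ∀ x y : Bool, (!x) ≠ y → y = x := by decide
      rcases Nat.even_or_odd m with ⟨a, ha⟩ | ⟨a, ha⟩
      · have e1 : tm (a+1) = tm a := by
          have := alt 1 (by omega)
          rw [show m+1+1 = 2*(a+1) by omega, show m+1 = 2*a+1 by omega, tm_odd, tm_even] at this
          exact flip _ _ this
        have e2 : tm (a+2) = tm (a+1) := by
          have := alt 3 (by omega)
          rw [show m+3+1 = 2*(a+2) by omega, show m+3 = 2*(a+1)+1 by omega, tm_odd, tm_even] at this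
          exact flip _ _ this
        exact tm_no_triple a ⟨e1.symm, e2.symm⟩
      · have e1 : tm (a+1) = tm a := by
          have := alt 0 (by omega)
          rw [show m+0+1 = 2*(a+1) by omega, show m+0 = 2*a+1 by omega, tm_odd, tm_even] at this
          exact flip _ _ this
        have e2 : tm (a+2) = tm (a+1) := by
          have := alt 2 (by omega)
          rw [show m+2+1 = 2*(a+2) by omega, show m+2 = 2*(a+1)+1 by omega, tm_odd, tm_even] at this
          exact flip _ _ this
        exact tm_no_triple a ⟨e1.symm, e2.symm⟩

def cw : ℕ → Fin 3 := fun n => if tm n = tm (n+1) then 0 else if tm n then 1 else 2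

lemma cw_up {p q : ℕ} (h : cw p = cw q) (e : tm p = tm q) : tm (p+1) = tm (q+1) := by
  unfold cw at h
  revert h e
  generalize tm p = a; generalize tm (p+1) = b; generalize tm q = c; generalize tm (q+1) = d
  revert a b c d
  decide

lemma cw_down {p q : ℕ} (h : cw p = cw q) (e : tm (p+1) = tm (q+1)) : tm p = tm q := by
  unfold cw at h
  revert h e
  generalize tm p = a; generalize tm (p+1) = b; generalize tm q = c; generalize tm (q+1) = d
  revert a b c d
  decide

lemma cw_nz {p q : ℕ} (h : cw p = cw q) (hnz : cw p ≠ 0) :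
    tm p = tm q ∧ tm (p+1) = tm (q+1) := by
  unfold cw at h hnz
  revert h hnz
  generalize tm p = a; generalize tm (p+1) = b; generalize tm q = c; generalize tm (q+1) = d
  revert a b c d
  decide

lemma cw_zero {n : ℕ} (h : cw n = 0) : tm n = tm (n+1) := by
  unfold cw at h
  revert h
  generalize tm n = a; generalize tm (n+1) = b
  revert a b
  decide

theorem cw_sqf : ∀ m k, 1 ≤ k → ∃ i < k, cw (m+i) ≠ cw (m+k+i) := by
  intro m k hk
  by_contra hcon
  push_neg at hcon
  suffices hall : ∀ i ≤ k, tm (m+i) = tm (m+k+i) by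
    obtain ⟨i, hi, hne⟩ := tm_of k hk m
    exact hne (hall i hi)
  by_cases hz : ∃ i0, i0 < k ∧ cw (m+i0) ≠ 0
  · obtain ⟨i0, hi0, hne0⟩ := hz
    have hbase := cw_nz (hcon i0 hi0) hne0
    have up : ∀ j, i0 + j ≤ k → tm (m+(i0+j)) = tm (m+k+(i0+j)) := by
      intro j
      induction j with
      | zero => intro _; simpa using hbase.1
      | succ j ih =>
        intro hjk
        have h1 := cw_up (hcon (i0+j) (by omega)) (ih (by omega))
        rw [show m+(i0+(j+1)) = m+(i0+j)+1 by omega, show m+k+(i0+(j+1)) = m+k+(i0+j)+1 by omega]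
        exact h1
    have down : ∀ j, tm (m+(i0-j)) = tm (m+k+(i0-j)) := by
      intro j
      induction j with
      | zero => simpa using hbase.1
      | succ j ih =>
        by_cases hj : j < i0
        · have e : tm (m+(i0-(j+1))+1) = tm (m+k+(i0-(j+1))+1) := by
            rw [show m+(i0-(j+1))+1 = m+(i0-j) by omega, show m+k+(i0-(j+1))+1 = m+k+(i0-j) by omega]
            exact ih
          exact cw_down (hcon (i0-(j+1)) (by omega)) e
        · rw [show i0-(j+1) = i0 - j by omega]; exact ih
    intro i hi
    rcases le_or_gt i0 i with hle | hlt
    · have := up (i - i0) (by omega)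
      rwa [show i0 + (i - i0) = i by omega] at this
    · have := down (i0 - i)
      rwa [show i0 - (i0 - i) = i by omega] at this
  · push_neg at hz
    have hz2 : ∀ i, i < 2*k → tm (m+i) = tm (m+i+1) := by
      intro i hi
      rcases Nat.lt_or_ge i k with h | h
      · exact cw_zero (hz i h)
      · have : cw (m+i) = 0 := by
          have := hcon (i-k) (by omega)
          rw [show m+k+(i-k) = m+i by omega] at this
          rw [← this]; exact hz (i-k) (by omega)
        exact cw_zero this
    have const : ∀ i, i ≤ 2*k → tm (m+i) = tm m := by
      intro i
      induction i with
      | zero => intro _; rfl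
      | succ i ih =>
        intro hi
        have := hz2 i (by omega)
        rw [show m+(i+1) = m+i+1 by omega, ← this]
        exact ih (by omega)
    intro i hi
    rw [const i (by omega), show m+k+i = m+(k+i) by omega, const (k+i) (by omega)]

lemma cw_adj (b : ℕ) : cw b ≠ cw (b+1) := by
  obtain ⟨i, hi, hne⟩ := cw_sqf b 1 le_rfl
  have : i = 0 := by omega
  subst this
  simpa using hne

def A5 (x : Fin 3) (r : ℕ) : Fin 5 := (alphaT x).getD r 0

def G3 (x y z : Fin 3) (j : ℕ) : Fin 5 :=
  A5 (if j < 7 then x else if j < 14 then y else z) (j % 7)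

lemma key6 : ∀ (x y z : Fin 3), x ≠ y → y ≠ z → ∀ (k : Fin 6) (r : Fin 7),
    ∃ i : Fin 6, i.1 ≤ k.1 ∧ G3 x y z (r.1+i.1) ≠ G3 x y z (r.1+(k.1+1)+i.1) := by decide

lemma pair_asym : ∀ i j : Fin 5, i ≠ j →
    ¬(((i = 4 ∧ j = 0) ∨ ∃ x : Fin 3, ∃ r : Fin 6, A5 x r.1 = i ∧ A5 x (r.1+1) = j) ∧
      ((j = 4 ∧ i = 0) ∨ ∃ x : Fin 3, ∃ r : Fin 6, A5 x r.1 = j ∧ A5 x (r.1+1) = i)) := by decide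

lemma A5_six (x : Fin 3) : A5 x 6 = 4 := by revert x; decide
lemma A5_zero (x : Fin 3) : A5 x 0 = 0 := by revert x; decide
lemma A5_ne_four : ∀ (x : Fin 3) (r : Fin 6), A5 x r.1 ≠ 4 := by decide
def dec5 : Fin 5 → Fin 3 := ![0,0,1,2,0]
lemma dec5_A5 : ∀ x : Fin 3, dec5 (A5 x 5) = x := by decide

def vword (n : ℕ) : Fin 5 := A5 (cw (n/7)) (n % 7)

lemma vword_pair (m : ℕ) :
    (vword m = 4 ∧ vword (m+1) = 0) ∨
    ∃ x : Fin 3, ∃ r : Fin 6, A5 x r.1 = vword m ∧ A5 x (r.1+1) = vword (m+1) := by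
  rcases Nat.lt_or_ge (m % 7) 6 with h | h
  · right
    refine ⟨cw (m/7), ⟨m % 7, h⟩, rfl, ?_⟩
    unfold vword
    rw [show (m+1) % 7 = m % 7 + 1 by omega, show (m+1)/7 = m/7 by omega]
  · left
    have h6 : m % 7 = 6 := by omega
    refine ⟨?_, ?_⟩
    · unfold vword; rw [h6]; exact A5_six _
    · unfold vword; rw [show (m+1) % 7 = 0 by omega]; exact A5_zero _

lemma vword_sqf : ∀ m k, 0 < k → ∃ i < k, vword (m+i) ≠ vword (m+k+i) := by
  intro m k hk
  by_contra hcon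
  push_neg at hcon
  rcases Nat.lt_or_ge k 7 with hk7 | hk7
  · -- short squares
    set b0 := m/7 with hb0
    set r := m % 7 with hr
    set x := cw b0 with hx
    set y := cw (b0+1) with hy
    set z := cw (b0+2) with hz
    have key : ∀ i, i < 2*k → vword (m+i) = G3 x y z (r+i) := by
      intro i hi
      unfold vword G3
      have hmod : (m+i) % 7 = (r+i) % 7 := by omega
      by_cases h7 : r+i < 7
      · rw [if_pos h7, show (m+i)/7 = b0 by omega, hmod]
      · rw [if_neg h7]
        by_cases h14 : r+i < 14
        · rw [if_pos h14, show (m+i)/7 = b0+1 by omega, hmod]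
        · rw [if_neg h14, show (m+i)/7 = b0+2 by omega, hmod]
    obtain ⟨i, hi, hne⟩ := key6 x y z (cw_adj b0) (cw_adj (b0+1)) ⟨k-1, by omega⟩ ⟨r, by omega⟩
    simp only at hi hne
    apply hne
    rw [show r + (k-1+1) + i.1 = r + (k + i.1) by omega]
    rw [← key i.1 (by omega), ← key (k+i.1) (by omega), show m + (k+i.1) = m+k+i.1 by omega]
    exact hcon i.1 (by omega)
  · rcases Nat.eq_zero_or_pos (k % 7) with hk0 | hkpos
    case inr =>
      -- k not a multiple of 7 : use the letter 4
      set i := 6 - m % 7 with hi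
      have h1 : vword (m+i) = 4 := by
        unfold vword; rw [show (m+i) % 7 = 6 by omega]; exact A5_six _
      have h2 : vword (m+k+i) ≠ 4 := by
        unfold vword
        have : (m+k+i) % 7 < 6 := by omega
        exact A5_ne_four _ ⟨(m+k+i) % 7, by omega⟩
      exact h2 (by rw [← hcon i (by omega), h1])
    case inl =>
      set q := k/7 with hq
      set b0 := (m+1)/7 with hb0
      have hcw : ∀ j, j < q → cw (b0+j) = cw (b0+q+j) := by
        intro j hj
        set b := b0 + j with hb
        set p := 7*b+5 with hp
        have hmp : m ≤ p := by omega
        set i := p - m with hi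
        have hik : i < k := by omega
        have e := hcon i hik
        have e1 : vword (m+i) = A5 (cw b) 5 := by
          unfold vword; rw [show (m+i)/7 = b by omega, show (m+i) % 7 = 5 by omega]
        have e2 : vword (m+k+i) = A5 (cw (b+q)) 5 := by
          unfold vword; rw [show (m+k+i)/7 = b+q by omega, show (m+k+i) % 7 = 5 by omega]
        have := congrArg dec5 (e1 ▸ e2 ▸ e)
        rw [dec5_A5, dec5_A5] at this
        rw [show b0+q+j = b+q by omega]
        exact this
      obtain ⟨j, hj, hne⟩ := cw_sqf b0 q (by omega)
      exact hne (by rw [show b0+q+j = b0+q+j from rfl] at *; exact hcw j hj)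

lemma len_alpha (x : Fin 3) : (alphaT x).length = 7 := by fin_cases x <;> rfl

lemma flat_len (w : List (Fin 3)) : (w.flatMap alphaT).length = 7 * w.length := by
  induction w with
  | nil => rfl
  | cons a w ih =>
    rw [List.flatMap_cons, List.length_append, len_alpha, ih, List.length_cons]; ring

lemma flat_getD (w : List (Fin 3)) (n : ℕ) (hn : n < 7 * w.length) :
    (w.flatMap alphaT).getD n 0 = A5 (w.getD (n/7) 0) (n % 7) := by
  induction w generalizing n with
  | nil => simp at hn
  | cons a w ih =>
    rw [List.flatMap_cons]
    rcases Nat.lt_or_ge n 7 with h | h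
    · rw [List.getD_append _ _ _ n (by rw [len_alpha]; exact h),
        show n/7 = 0 by omega, show n % 7 = n by omega]
      rfl
    · rw [List.getD_append_right _ _ _ n (by rw [len_alpha]; exact h), len_alpha]
      have hn' : n - 7 < 7 * w.length := by
        rw [List.length_cons] at hn; omega
      rw [ih (n-7) hn', show n/7 = ((n-7)/7)+1 by omega, List.getD_cons_succ,
        show (n-7) % 7 = n % 7 by omega]

lemma infix_getD {β : Type*} (d : β) {u L : List β} (h : u <:+: L) :
    ∃ s, s + u.length ≤ L.length ∧ ∀ i < u.length, u.getD i d = L.getD (s+i) d := by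
  obtain ⟨p, t, hpt⟩ := h
  refine ⟨p.length, ?_, ?_⟩
  · rw [← hpt]; simp [List.length_append]
  · intro i hi
    rw [← hpt, List.append_assoc,
      List.getD_append_right p (u++t) d (p.length + i) (by omega),
      Nat.add_sub_cancel_left, List.getD_append _ _ _ i hi]

lemma getD_infix {β : Type*} (d : β) (u L : List β) (s : ℕ) (h1 : s + u.length ≤ L.length)
    (h2 : ∀ i < u.length, u.getD i d = L.getD (s+i) d) : u <:+: L := by
  have hu : u = (L.drop s).take u.length := by
    apply List.ext_getElem
    · rw [List.length_take, List.length_drop]; omega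
    · intro i hi1 hi2
      rw [List.getElem_take, List.getElem_drop,
        ← List.getD_eq_getElem u d hi1, ← List.getD_eq_getElem L d (by omega), h2 i hi1]
  rw [hu]
  exact (List.take_prefix _ _).isInfix.trans (List.drop_suffix s L).isInfix


lemma sqfree_adj {w : List (Fin 3)} (hw : SqFree w) {b : ℕ} (hb : b+1 < w.length) :
    w.getD b 0 ≠ w.getD (b+1) 0 := by
  intro he
  apply hw [w.getD b 0] (by simp)
  apply getD_infix (0 : Fin 3) _ w b
  · simp; omega
  · intro i hi
    simp only [List.length_append, List.length_singleton] at hi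
    interval_cases i
    · simp
    · simpa using he

lemma fin3_ne_succ (t : Fin 3) : t ≠ t + 1 := by revert t; decide

theorem part1_sqf (w : List (Fin 3)) (hw : SqFree w) : SqFree (w.flatMap alphaT) := by
  intro u hu hinf
  obtain ⟨s, hlen, hget⟩ := infix_getD (0 : Fin 5) hinf
  set k := u.length with hk
  have hk1 : 1 ≤ k := by
    rw [hk]; exact List.length_pos_iff.mpr hu
  rw [List.length_append, flat_len, ← hk] at hlen
  set L := w.length with hL
  have hM : ∀ i, i < k →
      (w.flatMap alphaT).getD (s+i) 0 = (w.flatMap alphaT).getD (s+k+i) 0 := by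
    intro i hi
    have h1 := hget i (by rw [List.length_append, ← hk]; omega)
    have h2 := hget (k+i) (by rw [List.length_append, ← hk]; omega)
    rw [List.getD_append _ _ _ i (by omega)] at h1
    rw [List.getD_append_right u u 0 (k+i) (by omega), show k+i-u.length = i by omega] at h2
    rw [show s+k+i = s+(k+i) by omega, ← h2, ← h1]
  have hMA : ∀ i, i < k →
      A5 (w.getD ((s+i)/7) 0) ((s+i) % 7) = A5 (w.getD ((s+k+i)/7) 0) ((s+k+i) % 7) := by
    intro i hi
    rw [← flat_getD w (s+i) (by omega), ← flat_getD w (s+k+i) (by omega)]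
    exact hM i hi
  rcases Nat.lt_or_ge k 7 with hk7 | hk7
  · -- short squares
    set b0 := s/7 with hb0
    set r := s % 7 with hr
    set x := w.getD b0 0 with hx
    set y := (if b0+1 < L then w.getD (b0+1) 0 else x+1) with hy
    set z := (if b0+2 < L then w.getD (b0+2) 0 else y+1) with hz
    have hxy : x ≠ y := by
      rw [hy]; split
      · exact sqfree_adj hw (by omega)
      · exact fin3_ne_succ x
    have hyz : y ≠ z := by
      rw [hz]; split
      · rename_i hin
        rw [hy, if_pos (by omega)]
        exact sqfree_adj hw (by omega)
      · exact fin3_ne_succ y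
    have key : ∀ i, i < 2*k → A5 (w.getD ((s+i)/7) 0) ((s+i) % 7) = G3 x y z (r+i) := by
      intro i hi
      unfold G3
      have hmod : (s+i) % 7 = (r+i) % 7 := by omega
      by_cases h7 : r+i < 7
      · rw [if_pos h7, show (s+i)/7 = b0 by omega, hmod]
      · rw [if_neg h7]
        by_cases h14 : r+i < 14
        · have hdiv : (s+i)/7 = b0+1 := by omega
          have hbL : b0+1 < L := by omega
          rw [if_pos h14, hdiv, hmod, hy, if_pos hbL]
        · have hdiv : (s+i)/7 = b0+2 := by omega
          have hbL : b0+2 < L := by omega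
          rw [if_neg h14, hdiv, hmod, hz, if_pos hbL]
    obtain ⟨i, hi, hne⟩ := key6 x y z hxy hyz ⟨k-1, by omega⟩ ⟨r, by omega⟩
    simp only at hi hne
    apply hne
    rw [show r + (k-1+1) + i.1 = r + (k + i.1) by omega,
      ← key i.1 (by omega), ← key (k+i.1) (by omega),
      show s + (k+i.1) = s+k+i.1 by omega]
    exact hMA i.1 (by omega)
  · rcases Nat.eq_zero_or_pos (k % 7) with hk0 | hkpos
    case inr =>
      set i := 6 - s % 7 with hi
      have h1 : A5 (w.getD ((s+i)/7) 0) ((s+i) % 7) = 4 := by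
        rw [show (s+i) % 7 = 6 by omega]; exact A5_six _
      have h2 : A5 (w.getD ((s+k+i)/7) 0) ((s+k+i) % 7) ≠ 4 := by
        have : (s+k+i) % 7 < 6 := by omega
        exact A5_ne_four _ ⟨(s+k+i) % 7, by omega⟩
      exact h2 (by rw [← hMA i (by omega), h1])
    case inl =>
      set q := k/7 with hq
      set b0 := (s+1)/7 with hb0
      have hcw : ∀ j, j < q → w.getD (b0+j) 0 = w.getD (b0+q+j) 0 := by
        intro j hj
        set b := b0 + j with hb
        set p := 7*b+5 with hp
        have hmp : s ≤ p := by omega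
        set i := p - s with hi
        have hik : i < k := by omega
        have e := hMA i hik
        rw [show (s+i)/7 = b by omega, show (s+i) % 7 = 5 by omega,
          show (s+k+i)/7 = b+q by omega, show (s+k+i) % 7 = 5 by omega] at e
        have := congrArg dec5 e
        rw [dec5_A5, dec5_A5] at this
        rw [show b0+q+j = b+q by omega]
        exact this
      have hq1 : 1 ≤ q := by omega
      have hbL : b0 + 2*q ≤ L := by omega
      set u' := (List.range q).map (fun j => w.getD (b0+j) 0) with hu'
      have hulen : u'.length = q := by simp [hu']
      have hugetD : ∀ i, i < q → u'.getD i 0 = w.getD (b0+i) 0 := by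
        intro i hi
        rw [List.getD_eq_getElem _ _ (by rw [hulen]; exact hi)]
        simp [hu']
      apply hw u' (by intro h; rw [h] at hulen; simp at hulen; omega)
      apply getD_infix (0 : Fin 3) _ w b0
      · rw [List.length_append, hulen]; omega
      · intro i hi
        rw [List.length_append, hulen] at hi
        rcases Nat.lt_or_ge i q with h | h
        · rw [List.getD_append _ _ _ i (by omega), hugetD i h]
        · rw [List.getD_append_right _ _ _ i (by omega), hulen, hugetD (i-q) (by omega),
            hcw (i-q) (by omega), show b0+q+(i-q) = b0+i by omega]

lemma pair_mem_flat (w : List (Fin 3)) {i j : Fin 5} (h : [i, j] <:+: w.flatMap alphaT) :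
    (i = 4 ∧ j = 0) ∨ ∃ x : Fin 3, ∃ r : Fin 6, A5 x r.1 = i ∧ A5 x (r.1+1) = j := by
  obtain ⟨s, hlen, hget⟩ := infix_getD (0 : Fin 5) h
  rw [flat_len] at hlen
  have h0 := hget 0 (by simp)
  have h1 := hget 1 (by simp)
  have hi' : i = (w.flatMap alphaT).getD s 0 := by simpa using h0
  have hj' : j = (w.flatMap alphaT).getD (s+1) 0 := by simpa using h1
  have hlen2 : s + 2 ≤ 7 * w.length := by simpa using hlen
  rw [flat_getD w s (by omega)] at hi'
  rw [flat_getD w (s+1) (by omega)] at hj'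
  rcases Nat.lt_or_ge (s % 7) 6 with h6 | h6
  · right
    refine ⟨w.getD (s/7) 0, ⟨s % 7, h6⟩, hi'.symm, ?_⟩
    rw [hj', show (s+1)/7 = s/7 by omega, show (s+1) % 7 = s % 7 + 1 by omega]
  · refine Or.inl ⟨?_, ?_⟩
    · rw [hi', show s % 7 = 6 by omega]; exact A5_six _
    · rw [hj', show (s+1) % 7 = 0 by omega]; exact A5_zero _

/-- `α` is square-free and its images of square-free words are tournament words;
consequently there is an infinite square-free tournament word over 5 letters. -/
theorem tournament_word_exists :
    (∀ w : List (Fin 3), SqFree w →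
      SqFree (w.flatMap alphaT) ∧
      ∀ i j : Fin 5, i ≠ j →
        ¬ (([i, j] <:+: w.flatMap alphaT) ∧ ([j, i] <:+: w.flatMap alphaT))) ∧
    (∃ v : ℕ → Fin 5, InfSqFree v ∧
      ∀ i j : Fin 5, i ≠ j →
        ¬ ((∃ m, v m = i ∧ v (m + 1) = j) ∧ (∃ m, v m = j ∧ v (m + 1) = i))) := by
  constructor
  · intro w hw
    refine ⟨part1_sqf w hw, ?_⟩
    rintro i j hij ⟨h1, h2⟩
    exact pair_asym i j hij ⟨pair_mem_flat w h1, pair_mem_flat w h2⟩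
  · refine ⟨vword, vword_sqf, ?_⟩
    rintro i j hij ⟨⟨m1, e1, e1'⟩, ⟨m2, e2, e2'⟩⟩
    have p1 := vword_pair m1
    have p2 := vword_pair m2
    rw [e1, e1'] at p1
    rw [e2, e2'] at p2
    exact pair_asym i j hij ⟨p1, p2⟩
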